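/- Conservation of total energy for the truncated Hermite–Vlasov–Poisson system: if (C_0,…,C_{N_H−1}, E, Φ) is a solution of the truncated Hermite–Vlasov–Poisson system (with E and Φ also C¹ in t and mixed second derivatives of Φ continuous), then the total energy ℰ(t) := (1/2) ∫_0^L [ v_th³ (√2 · C_2(t,x) + C_0(t,x)) + E(t,x)² ] dx is constant in t, i.e. ℰ(t) = ℰ(0) for all t ≥ 0. -/

import Mathlib

/-!
The energy density `e = v_th³ (√2 C₂ + C₀) + E²` satisfies a local conservation law
`∂ₜ e + ∂ₓ q = 0` with an `L`-periodic flux `q`, so its integral over a period is constant.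
Differentiating the Poisson equation in time and using the moment equation for `C₀` gives
`∂ₜ E = c(t) - v_th² C₁`. The term `-2 v_th² E C₁` this contributes to `∂ₜ (E²)` cancels the
electric-field term of the moment equation for `C₂`, and the leftover `2 c(t) E = -∂ₓ (2 c(t) Φ)`
is again a flux.
-/

open MeasureTheory intervalIntegral Function

section SliceCalculus

variable {f : ℝ → ℝ → ℝ}

theorem ContDiff.contDiff_uncurry_right {n : WithTop ℕ∞} (hf : ContDiff ℝ n (uncurry f))
    (t : ℝ) : ContDiff ℝ n (f t) :=
  hf.comp (contDiff_const.prodMk contDiff_id)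

theorem ContDiff.hasDerivAt_uncurry_left (hf : ContDiff ℝ 1 (uncurry f)) (t x : ℝ) :
    HasDerivAt (fun s => f s x) (fderiv ℝ (uncurry f) (t, x) (1, 0)) t := by
  have h := (hf.differentiable one_ne_zero (t, x)).hasFDerivAt.comp_hasDerivAt t
    ((hasDerivAt_id t).prodMk (hasDerivAt_const t x))
  exact h

theorem ContDiff.continuous_deriv_uncurry_left (hf : ContDiff ℝ 1 (uncurry f)) :
    Continuous fun p : ℝ × ℝ => deriv (fun s => f s p.2) p.1 := by
  have h : (fun p : ℝ × ℝ => deriv (fun s => f s p.2) p.1) =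
      fun p => fderiv ℝ (uncurry f) p (1, 0) :=
    funext fun p => (hf.hasDerivAt_uncurry_left p.1 p.2).deriv
  rw [h]
  exact (hf.continuous_fderiv one_ne_zero).clm_apply continuous_const

theorem ContDiff.hasDerivAt_intervalIntegral_uncurry (hf : ContDiff ℝ 1 (uncurry f))
    (a b t : ℝ) :
    HasDerivAt (fun s => ∫ x in a..b, f s x) (∫ x in a..b, deriv (fun s => f s x) t) t := by
  have hslice (s : ℝ) : Continuous (f s) := (hf.contDiff_uncurry_right s).continuous
  have hderiv := hf.continuous_deriv_uncurry_left
  obtain ⟨M, hM⟩ := ((isCompact_closedBall t 1).prod isCompact_uIcc).exists_bound_of_continuousOn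
    hderiv.continuousOn
  exact (hasDerivAt_integral_of_dominated_loc_of_deriv_le (bound := fun _ => M)
    (Metric.ball_mem_nhds t one_pos)
    (.of_forall fun s => (hslice s).aestronglyMeasurable) ((hslice t).intervalIntegrable a b)
    ((hderiv.comp (continuous_const.prodMk continuous_id)).aestronglyMeasurable)
    (.of_forall fun x hx s hs =>
      hM (s, x) ⟨Metric.ball_subset_closedBall hs, Set.uIoc_subset_uIcc hx⟩)
    intervalIntegrable_const
    (.of_forall fun x _ s _ =>
      (hf.hasDerivAt_uncurry_left s x).differentiableAt.hasDerivAt)).2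

end SliceCalculus

theorem Function.Periodic.intervalIntegral_deriv_eq_zero {g : ℝ → ℝ} {L : ℝ}
    (hper : Periodic g L) (hg : ContDiff ℝ 1 g) : ∫ x in 0..L, deriv g x = 0 := by
  rw [integral_deriv_of_contDiffOn_uIcc hg.contDiffOn, (by simpa using hper 0 : g L = g 0),
    sub_self]

theorem intervalIntegral_eq_of_local_conservation {e q : ℝ → ℝ → ℝ} {L : ℝ}
    (he : ContDiff ℝ 1 (uncurry e)) (hq : ∀ t, ContDiff ℝ 1 (q t))
    (hqper : ∀ t, Periodic (q t) L) (hcons : ∀ t x, deriv (fun s => e s x) t = -deriv (q t) x)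
    (t t' : ℝ) : ∫ x in 0..L, e t x = ∫ x in 0..L, e t' x := by
  have hderiv (s : ℝ) : HasDerivAt (fun s => ∫ x in 0..L, e s x) 0 s := by
    have h := he.hasDerivAt_intervalIntegral_uncurry 0 L s
    rwa [integral_congr fun x _ => hcons s x, intervalIntegral.integral_neg,
      (hqper s).intervalIntegral_deriv_eq_zero (hq s), neg_zero] at h
  exact is_const_of_deriv_eq_zero (fun s => (hderiv s).differentiableAt)
    (fun s => (hderiv s).deriv) t t'

/-- Differentiates `E (s, x) = E (s, 0) + ∫₀ˣ G (s, y) dy` in `s`, so no mixed second derivative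
of `E` is needed. -/
theorem hasDerivAt_left_of_deriv_right_eq {E G H : ℝ → ℝ → ℝ}
    (hE : ContDiff ℝ 1 (uncurry E)) (hG : ContDiff ℝ 1 (uncurry G))
    (hH : ∀ t, ContDiff ℝ 1 (H t)) (hEG : ∀ t x, deriv (E t) x = G t x)
    (hGH : ∀ t x, deriv (fun s => G s x) t = -deriv (H t) x) (t x : ℝ) :
    HasDerivAt (fun s => E s x) (deriv (fun s => E s 0) t - (H t x - H t 0)) t := by
  have hrepr : (fun s => E s 0 + ∫ y in 0..x, G s y) = fun s => E s x := by
    funext s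
    rw [← integral_congr fun y _ => hEG s y,
      integral_deriv_of_contDiffOn_uIcc (hE.contDiff_uncurry_right s).contDiffOn]
    ring
  have hint := hG.hasDerivAt_intervalIntegral_uncurry 0 x t
  rw [integral_congr fun y _ => hGH t y, intervalIntegral.integral_neg,
    integral_deriv_of_contDiffOn_uIcc (hH t).contDiffOn] at hint
  rw [← hrepr, sub_eq_add_neg]
  exact (hE.hasDerivAt_uncurry_left t 0).differentiableAt.hasDerivAt.add hint

section HermiteVlasovPoisson

variable {vth : ℝ} {C : ℕ → ℝ → ℝ → ℝ} {E Φ : ℝ → ℝ → ℝ}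

noncomputable def energyDensity (vth : ℝ) (C : ℕ → ℝ → ℝ → ℝ) (E : ℝ → ℝ → ℝ) (t x : ℝ) : ℝ :=
  vth ^ 3 * (√2 * C 2 t x + C 0 t x) + E t x ^ 2

/-- `∂ₜ E (t, 0) + v_th² C₁ (t, 0)` is the spatially constant part of `∂ₜ E`
(`hasDerivAt_efield_left`). -/
noncomputable def energyFlux (vth : ℝ) (C : ℕ → ℝ → ℝ → ℝ) (E Φ : ℝ → ℝ → ℝ) (t x : ℝ) : ℝ :=
  vth ^ 4 * (√2 * √3 * C 3 t x + 3 * C 1 t x)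
    + 2 * (deriv (fun s => E s 0) t + vth ^ 2 * C 1 t 0) * Φ t x

theorem contDiff_energyDensity (hC : ∀ n, ContDiff ℝ 1 (uncurry (C n)))
    (hE1 : ContDiff ℝ 1 (uncurry E)) : ContDiff ℝ 1 (uncurry (energyDensity vth C E)) :=
  (contDiff_const.mul ((contDiff_const.mul (hC 2)).add (hC 0))).add (hE1.pow 2)

theorem contDiff_energyFlux (hC : ∀ n, ContDiff ℝ 1 (uncurry (C n)))
    (hΦ : ∀ t, ContDiff ℝ 1 (Φ t)) (t : ℝ) : ContDiff ℝ 1 (energyFlux vth C E Φ t) :=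
  (contDiff_const.mul ((contDiff_const.mul ((hC 3).contDiff_uncurry_right t)).add
    (contDiff_const.mul ((hC 1).contDiff_uncurry_right t)))).add (contDiff_const.mul (hΦ t))

theorem periodic_energyFlux {L : ℝ} (hC : ∀ n t, Periodic (C n t) L)
    (hΦ : ∀ t, Periodic (Φ t) L) (t : ℝ) : Periodic (energyFlux vth C E Φ t) L :=
  ((((hC 3 t).smul (√2 * √3)).add ((hC 1 t).smul (3 : ℝ))).smul (vth ^ 4)).add
    ((hΦ t).smul (_ : ℝ))

theorem hasDerivAt_efield_left {ρ0 : ℝ} (hC : ∀ n, ContDiff ℝ 1 (uncurry (C n)))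
    (hE1 : ContDiff ℝ 1 (uncurry E)) (hPoisson : ∀ t x, deriv (E t) x = vth * C 0 t x - ρ0)
    (hV0 : ∀ t x, deriv (fun s => C 0 s x) t = -vth * deriv (C 1 t) x) (t x : ℝ) :
    HasDerivAt (fun s => E s x)
      (deriv (fun s => E s 0) t + vth ^ 2 * C 1 t 0 - vth ^ 2 * C 1 t x) t := by
  refine (hasDerivAt_left_of_deriv_right_eq (G := fun t x => vth * C 0 t x - ρ0)
    (H := fun t x => vth ^ 2 * C 1 t x) hE1 ((contDiff_const.mul (hC 0)).sub contDiff_const)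
    (fun t => contDiff_const.mul ((hC 1).contDiff_uncurry_right t)) hPoisson
    (fun t x => ?_) t x).congr_deriv (by ring)
  have hC0t := ((hC 0).hasDerivAt_uncurry_left t x).differentiableAt.hasDerivAt
  have hC1x := (((hC 1).contDiff_uncurry_right t).differentiable one_ne_zero x).hasDerivAt
  rw [((hC0t.const_mul vth).sub_const ρ0).deriv, (hC1x.const_mul _).deriv, hV0]
  ring

theorem deriv_energyDensity_left {ρ0 : ℝ}
    (hC : ∀ n, ContDiff ℝ 1 (uncurry (C n))) (hE1 : ContDiff ℝ 1 (uncurry E))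
    (hΦ : ∀ t, ContDiff ℝ 1 (Φ t)) (hE : ∀ t x, E t x = -deriv (Φ t) x)
    (hPoisson : ∀ t x, deriv (E t) x = vth * C 0 t x - ρ0)
    (hV0 : ∀ t x, deriv (fun s => C 0 s x) t = -vth * deriv (C 1 t) x)
    (hV2 : ∀ t x, deriv (fun s => C 2 s x) t = -vth * (√3 * deriv (C 3 t) x
      + √2 * deriv (C 1 t) x) + (√2 / vth) * E t x * C 1 t x) (t x : ℝ) :
    deriv (fun s => energyDensity vth C E s x) t = -deriv (energyFlux vth C E Φ t) x := by
  have hCt (n : ℕ) := ((hC n).hasDerivAt_uncurry_left t x).differentiableAt.hasDerivAt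
  have hCx (n : ℕ) := (((hC n).contDiff_uncurry_right t).differentiable one_ne_zero x).hasDerivAt
  have hEt := hasDerivAt_efield_left hC hE1 hPoisson hV0 t x
  have hΦx := ((hΦ t).differentiable one_ne_zero x).hasDerivAt
  set c := deriv (fun s => E s 0) t + vth ^ 2 * C 1 t 0
  have hdensity : HasDerivAt (fun s => energyDensity vth C E s x)
      (vth ^ 3 * (√2 * deriv (fun s => C 2 s x) t + deriv (fun s => C 0 s x) t)
        + 2 * E t x * (c - vth ^ 2 * C 1 t x)) t :=
    ((((hCt 2).const_mul √2).add (hCt 0)).const_mul (vth ^ 3)).add (hEt.pow 2)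
      |>.congr_deriv (by ring)
  have hflux : HasDerivAt (energyFlux vth C E Φ t)
      (vth ^ 4 * (√2 * √3 * deriv (C 3 t) x + 3 * deriv (C 1 t) x) + 2 * c * deriv (Φ t) x) x :=
    (((hCx 3).const_mul (√2 * √3)).add ((hCx 1).const_mul 3)).const_mul (vth ^ 4)
      |>.add (hΦx.const_mul (2 * c))
  rw [hdensity.deriv, hflux.deriv, hV0, hV2, hE t x]
  field_simp
  linear_combination (-vth ^ 4 * deriv (C 1 t) x - vth ^ 2 * deriv (Φ t) x * C 1 t x)
    * Real.mul_self_sqrt zero_le_two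

end HermiteVlasovPoisson

theorem truncated_hermite_vlasov_poisson_energy_conservation_general
    (L vth ρ0 : ℝ) (NH : ℕ) (hNH : 3 ≤ NH)
    (C : ℕ → ℝ → ℝ → ℝ) (E Φ : ℝ → ℝ → ℝ)
    -- regularity: each `C n` and `E` are C¹ in (t,x), `Φ` is C¹ and C² in x
    (hC1 : ∀ n, ContDiff ℝ 1 (fun p : ℝ × ℝ => C n p.1 p.2))
    (hE1 : ContDiff ℝ 1 (fun p : ℝ × ℝ => E p.1 p.2))
    (hΦ2 : ContDiff ℝ 2 (fun p : ℝ × ℝ => Φ p.1 p.2))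
    -- L-periodicity in space
    (hCper : ∀ n t, Function.Periodic (fun x => C n t x) L)
    (hΦper : ∀ t, Function.Periodic (fun x => Φ t x) L)
    -- the truncated Hermite expansion of the Vlasov equation
    -- (the `n = 0` case of `C (n-1)` is irrelevant since `√0 = 0`)
    (hVlasov : ∀ n, n < NH → ∀ t x,
      deriv (fun s => C n s x) t
        + vth * (Real.sqrt (n + 1) * deriv (fun y => C (n + 1) t y) x
            + Real.sqrt n * deriv (fun y => C (n - 1) t y) x)
        - (Real.sqrt n / vth) * E t x * C (n - 1) t x = 0)
    -- the electric field and the Poisson equation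
    (hE : ∀ t x, E t x = -deriv (fun y => Φ t y) x)
    (hPoisson : ∀ t x, deriv (fun y => E t y) x = vth * C 0 t x - ρ0) :
    ∀ t, 0 ≤ t →
      (1 / 2) * ∫ x in (0:ℝ)..L,
          (vth ^ 3 * (Real.sqrt 2 * C 2 t x + C 0 t x) + (E t x) ^ 2)
        = (1 / 2) * ∫ x in (0:ℝ)..L,
          (vth ^ 3 * (Real.sqrt 2 * C 2 0 x + C 0 0 x) + (E 0 x) ^ 2) := by
  intro t _
  have hV0 (t x : ℝ) : deriv (fun s => C 0 s x) t = -vth * deriv (C 1 t) x := by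
    have h := hVlasov 0 (by omega) t x
    norm_num at h
    linarith
  have hV2 (t x : ℝ) : deriv (fun s => C 2 s x) t = -vth * (√3 * deriv (C 3 t) x
      + √2 * deriv (C 1 t) x) + (√2 / vth) * E t x * C 1 t x := by
    have h := hVlasov 2 (by omega) t x
    norm_num at h
    linarith
  have hΦ1 (t : ℝ) : ContDiff ℝ 1 (Φ t) := (hΦ2.of_le one_le_two).contDiff_uncurry_right t
  exact congrArg (1 / 2 * ·) (intervalIntegral_eq_of_local_conservation
    (contDiff_energyDensity hC1 hE1) (contDiff_energyFlux hC1 hΦ1) (periodic_energyFlux hCper hΦper)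
    (deriv_energyDensity_left hC1 hE1 hΦ1 hE hPoisson hV0 hV2) t 0)

/-- Conservation of total energy for the truncated Hermite–Vlasov–Poisson system:
`ℰ(t) := (1/2) ∫_0^L [v_th³ (√2 C_2 + C_0) + E²] dx` is conserved in time. -/
theorem truncated_hermite_vlasov_poisson_energy_conservation
    (L vth ρ0 : ℝ) (NH : ℕ) (hL : 0 < L) (hvth : 0 < vth) (hNH : 3 ≤ NH)
    (C : ℕ → ℝ → ℝ → ℝ) (E Φ : ℝ → ℝ → ℝ)
    -- regularity: each `C n` and `E` are C¹ in (t,x), `Φ` is C¹ and C² in x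
    (hC1 : ∀ n, ContDiff ℝ 1 (fun p : ℝ × ℝ => C n p.1 p.2))
    (hE1 : ContDiff ℝ 1 (fun p : ℝ × ℝ => E p.1 p.2))
    (hΦ2 : ContDiff ℝ 2 (fun p : ℝ × ℝ => Φ p.1 p.2))
    -- L-periodicity in space
    (hCper : ∀ n t, Function.Periodic (fun x => C n t x) L)
    (hEper : ∀ t, Function.Periodic (fun x => E t x) L)
    (hΦper : ∀ t, Function.Periodic (fun x => Φ t x) L)
    -- truncation convention `C_{N_H} = 0` (and beyond)
    (hCtop : ∀ n, NH ≤ n → C n = 0)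
    -- the truncated Hermite expansion of the Vlasov equation
    -- (the `n = 0` case of `C (n-1)` is irrelevant since `√0 = 0`)
    (hVlasov : ∀ n, n < NH → ∀ t x,
      deriv (fun s => C n s x) t
        + vth * (Real.sqrt (n + 1) * deriv (fun y => C (n + 1) t y) x
            + Real.sqrt n * deriv (fun y => C (n - 1) t y) x)
        - (Real.sqrt n / vth) * E t x * C (n - 1) t x = 0)
    -- the electric field and the Poisson equation
    (hE : ∀ t x, E t x = -deriv (fun y => Φ t y) x)
    (hPoisson : ∀ t x, deriv (fun y => E t y) x = vth * C 0 t x - ρ0) :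
    ∀ t, 0 ≤ t →
      (1 / 2) * ∫ x in (0:ℝ)..L,
          (vth ^ 3 * (Real.sqrt 2 * C 2 t x + C 0 t x) + (E t x) ^ 2)
        = (1 / 2) * ∫ x in (0:ℝ)..L,
          (vth ^ 3 * (Real.sqrt 2 * C 2 0 x + C 0 0 x) + (E 0 x) ^ 2) :=
  truncated_hermite_vlasov_poisson_energy_conservation_general L vth ρ0 NH hNH C E Φ hC1 hE1 hΦ2
    hCper hΦper hVlasov hE hPoisson
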